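/- Consider the deformed standard bracket on Λ•g* for the 2-dimensional Lie algebra g with [y₁,y₂]=y₁, dual basis z₁, z₂, and deforming closed 1-form φ = z₂: [α,β]_{t,φ} = (-1)^a d(α∧β) + ((a+b+2)/2) α ∧ tz₂ ∧ β. Then the boundary operator on the weight-(−3) chain complex satisfies ∂(z_j ⊼ 1) = δ_j^1 (1 + (3/2)t) z₁∧z₂ and ∂(⊼³1) = t z₂ ⊼ 1, and consequently the weight-(−3) Betti numbers in degrees 1,2,3 are (δ_{2+3t,0}, δ_{2+3t,0} + δ_{t,0}, δ_{t,0}). -/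

import Mathlib

/-! In these coordinates `∂₂` is `(c₁, c₂) ↦ ((2 + 3t)/2) c₁` and `∂₃` is `c ↦ (0, t c)`. A nonzero
linear map into, or out of, the one-dimensional space `ℝ` is surjective, resp. injective, so
each boundary map has rank 1 unless its scalar vanishes; rank–nullity then gives the Betti
numbers, the cases `2 + 3t = 0` and `t = 0` being exclusive. -/

/-- Model of the exterior algebra `Λ•g*` of the nonabelian 2-dimensional Lie
algebra `g` (with `[y₁,y₂] = y₁`): a quadruple of coordinates in the basis
`1, z₁, z₂, z₁∧z₂`. -/
abbrev LamG : Type := ℝ × (ℝ × ℝ) × ℝ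

namespace LamG

/-- Wedge product in the coordinates `(c₀, (c₁, c₂), c₁₂)`. -/
noncomputable def wedge (x y : LamG) : LamG :=
  (x.1 * y.1,
   (x.1 * y.2.1.1 + x.2.1.1 * y.1, x.1 * y.2.1.2 + x.2.1.2 * y.1),
   x.1 * y.2.2 + x.2.2 * y.1 + (x.2.1.1 * y.2.1.2 - x.2.1.2 * y.2.1.1))

/-- The Chevalley–Eilenberg differential: `d z₁ = -z₁∧z₂`, `d z₂ = 0`,
`d 1 = 0`, `d (z₁∧z₂) = 0`. -/
noncomputable def dCE (x : LamG) : LamG := (0, (0, 0), -x.2.1.1)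

/-- The unit `1 ∈ Λ⁰g*`. -/
def one : LamG := (1, (0, 0), 0)

/-- The basis 1-form `z₁`. -/
def z1 : LamG := (0, (1, 0), 0)

/-- The basis 1-form `z₂` (the deforming closed 1-form `φ`). -/
def z2 : LamG := (0, (0, 1), 0)

/-- The top form `z₁ ∧ z₂`. -/
def w12 : LamG := (0, (0, 0), 1)

/-- The deformed standard bracket
`[α,β]_{t,φ} = (-1)^a d(α∧β) + ((a+b+2)/2) α ∧ tz₂ ∧ β` for `α` of degree `a`
and `β` of degree `b`, with deforming 1-form `φ = z₂`. -/
noncomputable def bkt (t : ℝ) (a b : ℕ) (x y : LamG) : LamG :=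
  ((-1 : ℝ) ^ a) • dCE (wedge x y) +
    (((a : ℝ) + (b : ℝ) + 2) / 2) • wedge x (wedge (t • z2) y)

end LamG

namespace LamG

variable (t : ℝ)

theorem bkt_z1_one : bkt t 1 0 z1 one = (1 + (3 / 2) * t) • w12 := by
  ext <;> norm_num [bkt, dCE, wedge, z1, z2, one, w12]

theorem bkt_z2_one : bkt t 1 0 z2 one = 0 := by
  ext <;> simp [bkt, dCE, wedge, z2, one]

theorem bkt_one_one : bkt t 0 0 one one = t • z2 := by
  ext <;> simp [bkt, dCE, wedge, z2, one]

end LamG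

namespace LinearMap

variable {K V : Type*} [DivisionRing K] [AddCommGroup V] [Module K V]

theorem finrank_range_of_codomain_self (f : V →ₗ[K] K) [Decidable (f = 0)] :
    Module.finrank K (range f) = if f = 0 then 0 else 1 := by
  split_ifs with hf
  · simp [hf]
  · rw [range_eq_top.2 (f.surjective_or_eq_zero.resolve_right hf), finrank_top,
      Module.finrank_self]

theorem finrank_ker_of_domain_self (g : K →ₗ[K] V) [Decidable (g = 0)] :
    Module.finrank K (ker g) = if g = 0 then 1 else 0 := by
  split_ifs with hg
  · rw [hg, ker_zero, finrank_top, Module.finrank_self]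
  · simp [ker_eq_bot.2 (g.injective_or_eq_zero.resolve_right hg)]

end LinearMap

open LamG in
/-- For the 2-dimensional Lie algebra with `[y₁,y₂] = y₁`, dual basis
`z₁, z₂` and deforming closed 1-form `φ = z₂`, the boundary operator of the
weight-(−3) chain complex of the deformed standard bracket satisfies
`∂(z₁⊼1) = (1 + (3/2)t) z₁∧z₂`, `∂(z₂⊼1) = 0`, `∂(⊼³1) = t z₂⊼1`
(via `[1,1]_{t,φ} = t z₂`), and the weight-(−3) Betti numbers in degrees
`1, 2, 3` are `(δ_{2+3t,0}, δ_{2+3t,0} + δ_{t,0}, δ_{t,0})`.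
Here `C₁ ≅ ℝ` (basis `z₁∧z₂`), `C₂ ≅ ℝ²` (basis `z₁⊼1, z₂⊼1`), `C₃ ≅ ℝ`
(basis `⊼³1`); `D2`, `D3` are the boundary maps computed from the bracket,
`∂₂(c₁,c₂) = ` coefficient of `z₁∧z₂` in `c₁[z₁,1] + c₂[z₂,1]`, and
`∂₃ c = ` the degree-1 part of `c[1,1]` (the coefficients of `z_j ⊼ 1`). -/
theorem stmt_15 (t : ℝ) (D2 : ℝ × ℝ →ₗ[ℝ] ℝ) (D3 : ℝ →ₗ[ℝ] ℝ × ℝ)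
    (hD2 : ∀ c : ℝ × ℝ,
      D2 c = (c.1 • bkt t 1 0 z1 one + c.2 • bkt t 1 0 z2 one).2.2)
    (hD3 : ∀ c : ℝ, D3 c = (c • bkt t 0 0 one one).2.1) :
    (bkt t 1 0 z1 one = (1 + (3 / 2) * t) • w12 ∧
      bkt t 1 0 z2 one = 0 ∧
      bkt t 0 0 one one = t • z2) ∧
    (1 - Module.finrank ℝ (LinearMap.range D2) =
      if (2 + 3 * t : ℝ) = 0 then 1 else 0) ∧
    (Module.finrank ℝ (LinearMap.ker D2) -
        Module.finrank ℝ (LinearMap.range D3) =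
      (if (2 + 3 * t : ℝ) = 0 then 1 else 0) + (if t = 0 then 1 else 0)) ∧
    (Module.finrank ℝ (LinearMap.ker D3) = if t = 0 then 1 else 0) := by
  classical
  have hD2_zero : D2 = 0 ↔ (2 + 3 * t : ℝ) = 0 := by
    have hD2_apply (c : ℝ × ℝ) : D2 c = c.1 * ((2 + 3 * t) / 2) := by
      simp only [hD2, bkt_z1_one, bkt_z2_one, w12, smul_zero, add_zero, Prod.smul_snd,
        smul_eq_mul]
      ring
    refine ⟨fun h => ?_, fun h => LinearMap.ext fun c => ?_⟩
    · simpa using (hD2_apply (1, 0)).symm.trans (LinearMap.congr_fun h _)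
    · simp [hD2_apply, h]
  have hD3_zero : D3 = 0 ↔ t = 0 := by
    rw [LinearMap.ext_ring_iff, hD3, bkt_one_one]
    simp [z2]
  have hrange2 :
      Module.finrank ℝ (LinearMap.range D2) = if (2 + 3 * t : ℝ) = 0 then 0 else 1 := by
    simpa only [hD2_zero] using D2.finrank_range_of_codomain_self
  have hker3 : Module.finrank ℝ (LinearMap.ker D3) = if t = 0 then 1 else 0 := by
    simpa only [hD3_zero] using D3.finrank_ker_of_domain_self
  have hnullity2 := D2.finrank_range_add_finrank_ker
  have hnullity3 := D3.finrank_range_add_finrank_ker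
  rw [Module.finrank_prod, Module.finrank_self] at hnullity2
  rw [Module.finrank_self] at hnullity3
  refine ⟨⟨bkt_z1_one t, bkt_z2_one t, bkt_one_one t⟩, ?_, ?_, hker3⟩ <;>
    split_ifs at hrange2 hker3 ⊢ <;> omega
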